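/- Let C ⊆ GF(4)^n be an additive code of type 4^{k_0}2^{k_1} with coordinates arranged in standard form, with C ⊆ C⊥ (trace-Hermitian dual) and C ≠ C⊥, and let d be the minimum Hamming weight of the codewords in C⊥ \ C. If 3k_1 < 2n − 4k_0 (equivalently, k_1 < 2k where k = n − 2k_0 − k_1), then there exists an additive code S ⊆ GF(4)^{n−k_0−k_1} with |S| = 2^{2n−4k_0−3k_1} all of whose nonzero codewords have Hamming weight at least d; equivalently, there exists an additive [(n+k−k_1)/2, 2k−k_1] code of minimum distance at least d. -/

import Mathlib

open Finset

/-- The field `GF(4)`. -/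
abbrev F4 := GaloisField 2 2

/-- The Hamming weight of a vector: the number of nonzero coordinates. -/
noncomputable def hWt {ι : Type} [Fintype ι] {F : Type} [Zero F] (v : ι → F) : ℕ :=
  Nat.card {i : ι // v i ≠ 0}

/-- The trace-Hermitian inner product on `GF(4)^n`:
`u*v = ∑ᵢ (uᵢ vᵢ² + uᵢ² vᵢ)`. -/
noncomputable def trInner {ι : Type} [Fintype ι] (u v : ι → F4) : F4 :=
  ∑ i, (u i * (v i) ^ 2 + (u i) ^ 2 * v i)

/-- The dual of a set of vectors in `GF(4)^n` with respect to the trace-Hermitian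
inner product. -/
noncomputable def trDual {ι : Type} [Fintype ι] (C : Set (ι → F4)) : Set (ι → F4) :=
  {v | ∀ u ∈ C, trInner v u = 0}

/-- The rows of the standard-form generator matrix
`[[I_{k₀}, ωA₁, B₁], [ωI_{k₀}, ωA₂, B₂], [0, I_{k₁}, A₃]]` of an additive code of
type `4^{k₀}2^{k₁}` and length `n = k₀ + k₁ + m`, with column blocks of sizes
`k₀, k₁, m`. -/
noncomputable def stdRow (k0 k1 m : ℕ) (ω : F4)
    (A1 A2 : Matrix (Fin k0) (Fin k1) F4) (A3 : Matrix (Fin k1) (Fin m) F4)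
    (B1 B2 : Matrix (Fin k0) (Fin m) F4) :
    (Fin k0 ⊕ Fin k0 ⊕ Fin k1) → (Fin k0 ⊕ Fin k1 ⊕ Fin m) → F4
  | Sum.inl i =>
      Sum.elim (fun j => if j = i then 1 else 0)
        (Sum.elim (fun j => ω * A1 i j) (fun j => B1 i j))
  | Sum.inr (Sum.inl i) =>
      Sum.elim (fun j => if j = i then ω else 0)
        (Sum.elim (fun j => ω * A2 i j) (fun j => B2 i j))
  | Sum.inr (Sum.inr i) =>
      Sum.elim (fun _ => 0)
        (Sum.elim (fun j => if j = i then 1 else 0) (fun j => A3 i j))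

/-! ### Auxiliary facts about `F4` -/

noncomputable instance : Fintype F4 := Fintype.ofFinite F4

lemma zmod2_cases : ∀ s : ZMod 2, s = 0 ∨ s = 1 := by decide

lemma cardF4 : Fintype.card F4 = 4 := by
  simpa using GaloisField.card 2 2 (by norm_num)

lemma finrankF4 : Module.finrank (ZMod 2) F4 = 2 := by
  have h := Module.card_eq_pow_finrank (K := ZMod 2) (V := F4)
  rw [cardF4, ZMod.card] at h
  have h2 : (2:ℕ)^2 = 2 ^ Module.finrank (ZMod 2) F4 := by norm_num at h ⊢; exact h
  exact (Nat.pow_right_injective le_rfl h2).symm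

lemma pow4 (x : F4) : x ^ 4 = x := by
  have := FiniteField.pow_card x
  rwa [cardF4] at this

section om
variable {ω : F4} (hω : orderOf ω = 3)
include hω

lemma om_ne_zero : ω ≠ 0 := by
  intro h
  have := pow_orderOf_eq_one ω
  rw [hω, h] at this
  simp at this

lemma om_ne_one : ω ≠ 1 := by
  intro h; rw [h, orderOf_one] at hω; omega

lemma om_add_one_ne_zero : 1 + ω ≠ 0 := by
  intro h
  have hneg : ω = -1 := by linear_combination h
  have : ω = 1 := by rw [hneg, CharTwo.neg_eq]
  exact om_ne_one hω this

lemma liPair : LinearIndependent (ZMod 2) ![(1:F4), ω] := by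
  rw [LinearIndependent.pair_iff]
  intro s t h
  rcases zmod2_cases s with rfl|rfl <;> rcases zmod2_cases t with rfl|rfl
  · exact ⟨rfl, rfl⟩
  · simp only [zero_smul, one_smul, zero_add] at h
    exact absurd h (om_ne_zero hω)
  · simp only [zero_smul, one_smul, add_zero, smul_eq_mul, mul_one] at h
    exact absurd h one_ne_zero
  · simp only [one_smul, smul_eq_mul, mul_one] at h
    exact absurd h (om_add_one_ne_zero hω)

noncomputable def b4 : Module.Basis (Fin 2) (ZMod 2) F4 :=
  basisOfLinearIndependentOfCardEqFinrank (liPair hω) (by simp [finrankF4])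

noncomputable def tau : F4 →ₗ[ZMod 2] ZMod 2 := (b4 hω).coord 0

lemma tau_one : tau hω 1 = 1 := by
  have h0 : b4 hω 0 = 1 := by
    rw [b4, coe_basisOfLinearIndependentOfCardEqFinrank]; rfl
  simp only [tau, Module.Basis.coord_apply]
  rw [← h0, (b4 hω).repr_self 0]
  simp

lemma tau_eq_zero {x : F4} (hx : x = 0 ∨ x = 1) (h : tau hω x = 0) : x = 0 := by
  rcases hx with rfl|rfl
  · rfl
  · rw [tau_one hω] at h; exact absurd h one_ne_zero

end om

/-! ### Bilinearity of `trInner` -/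

section bil
variable {ι : Type} [Fintype ι]

lemma trInner_add_left (u u' v : ι → F4) :
    trInner (u + u') v = trInner u v + trInner u' v := by
  rw [trInner, trInner, trInner, ← Finset.sum_add_distrib]
  apply Finset.sum_congr rfl
  intro i _
  simp only [Pi.add_apply]
  rw [add_pow_char (p := 2)]
  ring

lemma trInner_add_right (u v v' : ι → F4) :
    trInner u (v + v') = trInner u v + trInner u v' := by
  rw [trInner, trInner, trInner, ← Finset.sum_add_distrib]
  apply Finset.sum_congr rfl
  intro i _
  simp only [Pi.add_apply]
  rw [add_pow_char (p := 2)]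
  ring

lemma trInner_zero_left (v : ι → F4) : trInner 0 v = 0 := by simp [trInner]

lemma trInner_zero_right (v : ι → F4) : trInner v 0 = 0 := by simp [trInner]

lemma trInner_smul_left (c : ZMod 2) (u v : ι → F4) :
    trInner (c • u) v = c • trInner u v := by
  rcases zmod2_cases c with rfl|rfl
  · simp [trInner_zero_left]
  · simp

lemma trInner_smul_right (c : ZMod 2) (u v : ι → F4) :
    trInner u (c • v) = c • trInner u v := by
  rcases zmod2_cases c with rfl|rfl
  · simp [trInner_zero_right]
  · simp

lemma trInner_mem (u v : ι → F4) : trInner u v = 0 ∨ trInner u v = 1 := by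
  have hsq : trInner u v ^ 2 = trInner u v := by
    rw [trInner, sum_pow_char (p := 2)]
    apply Finset.sum_congr rfl
    intro i _
    rw [add_pow_char (p := 2), mul_pow, mul_pow, ← pow_mul, ← pow_mul]
    norm_num
    rw [pow4, pow4]
    ring
  have : trInner u v * (trInner u v - 1) = 0 := by ring_nf; linear_combination hsq
  rcases mul_eq_zero.mp this with h|h
  · exact Or.inl h
  · exact Or.inr (by linear_combination h)

/-! ### The dual bound map -/

variable {ω : F4} (hω : orderOf ω = 3)

noncomputable def Bform (hω : orderOf ω = 3) :
    (ι → F4) →ₗ[ZMod 2] (ι → F4) →ₗ[ZMod 2] ZMod 2 :=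
  LinearMap.mk₂ (ZMod 2) (fun v u => tau hω (trInner v u))
    (fun v v' u => by rw [trInner_add_left, map_add])
    (fun c v u => by rw [trInner_smul_left, map_smul])
    (fun v u u' => by rw [trInner_add_right, map_add])
    (fun c v u => by rw [trInner_smul_right, map_smul])

variable (C : Submodule (ZMod 2) (ι → F4))

noncomputable def Psi : (ι → F4) →ₗ[ZMod 2] Module.Dual (ZMod 2) C :=
  (Bform (ι := ι) hω).compl₂ C.subtype

lemma ker_Psi_subset :
    (LinearMap.ker (Psi hω C) : Set (ι → F4)) ⊆ trDual (C : Set (ι → F4)) := by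
  intro v hv u hu
  have hv' : Psi hω C v = 0 := LinearMap.mem_ker.mp hv
  have h : Psi hω C v ⟨u, hu⟩ = 0 := by rw [hv']; rfl
  exact tau_eq_zero hω (trInner_mem v u) h

lemma finrank_ker_Psi :
    Module.finrank (ZMod 2) (ι → F4) ≤
      Module.finrank (ZMod 2) (LinearMap.ker (Psi hω C)) + Module.finrank (ZMod 2) C := by
  have h := LinearMap.finrank_range_add_finrank_ker (Psi hω C)
  have h2 : Module.finrank (ZMod 2) (LinearMap.range (Psi hω C)) ≤
      Module.finrank (ZMod 2) (Module.Dual (ZMod 2) C) := Submodule.finrank_le _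
  rw [Subspace.dual_finrank_eq] at h2
  omega

end bil

/-! ### Codewords of `C` vanishing on the first two blocks are zero -/

lemma std_zero {k0 k1 m : ℕ} {ω : F4}
    {A1 A2 : Matrix (Fin k0) (Fin k1) F4} {A3 : Matrix (Fin k1) (Fin m) F4}
    {B1 B2 : Matrix (Fin k0) (Fin m) F4}
    (hω : orderOf ω = 3)
    {v : (Fin k0 ⊕ Fin k1 ⊕ Fin m) → F4}
    (hv : v ∈ Submodule.span (ZMod 2) (Set.range (stdRow k0 k1 m ω A1 A2 A3 B1 B2)))
    (h1 : ∀ a, v (Sum.inl a) = 0) (h2 : ∀ b, v (Sum.inr (Sum.inl b)) = 0) :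
    v = 0 := by
  rw [Submodule.mem_span_range_iff_exists_fun] at hv
  obtain ⟨c, hc⟩ := hv
  -- coefficients in the first two groups vanish
  have key1 : ∀ j : Fin k0, c (Sum.inl j) = 0 ∧ c (Sum.inr (Sum.inl j)) = 0 := by
    intro j
    have e := congrFun hc (Sum.inl j)
    rw [Finset.sum_apply, h1 j] at e
    rw [Fintype.sum_sum_type] at e
    simp only [Fintype.sum_sum_type, Pi.smul_apply, stdRow, Sum.elim_inl, smul_ite, smul_zero,
      Finset.sum_ite_eq, Finset.mem_univ, if_true, Finset.sum_const_zero, add_zero] at e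
    rcases zmod2_cases (c (Sum.inl j)) with hs|hs <;>
      rcases zmod2_cases (c (Sum.inr (Sum.inl j))) with ht|ht <;>
      rw [hs, ht] at e <;> simp only [zero_smul, one_smul, add_zero, zero_add] at e
    · exact ⟨hs, ht⟩
    · exact absurd e (om_ne_zero hω)
    · exact absurd e one_ne_zero
    · exact absurd e (om_add_one_ne_zero hω)
  have key2 : ∀ j : Fin k1, c (Sum.inr (Sum.inr j)) = 0 := by
    intro j
    have e := congrFun hc (Sum.inr (Sum.inl j))
    rw [Finset.sum_apply, h2 j] at e
    rw [Fintype.sum_sum_type] at e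
    simp only [Fintype.sum_sum_type, Pi.smul_apply, stdRow, Sum.elim_inr, Sum.elim_inl, smul_ite,
      smul_zero, Finset.sum_ite_eq, Finset.mem_univ, if_true] at e
    have z1 : ∀ i : Fin k0, c (Sum.inl i) • (ω * A1 i j) = 0 := fun i => by
      rw [(key1 i).1, zero_smul]
    have z2 : ∀ i : Fin k0, c (Sum.inr (Sum.inl i)) • (ω * A2 i j) = 0 := fun i => by
      rw [(key1 i).2, zero_smul]
    rw [Finset.sum_congr rfl (fun i _ => z1 i), Finset.sum_congr rfl (fun i _ => z2 i)] at e
    simp only [Finset.sum_const_zero, zero_add] at e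
    rcases zmod2_cases (c (Sum.inr (Sum.inr j))) with hs|hs
    · exact hs
    · rw [hs, one_smul] at e; exact absurd e one_ne_zero
  have hall : ∀ r, c r = 0 := by
    rintro (j | j | j)
    · exact (key1 j).1
    · exact (key1 j).2
    · exact key2 j
  rw [← hc]
  apply Finset.sum_eq_zero
  intro r _
  rw [hall r, zero_smul]

/-! ### Weight of a vector supported on the last block -/

lemma hWt_proj {k0 k1 m : ℕ} (v : (Fin k0 ⊕ Fin k1 ⊕ Fin m) → F4)
    (h1 : ∀ a, v (Sum.inl a) = 0) (h2 : ∀ b, v (Sum.inr (Sum.inl b)) = 0)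
    (w : Fin m → F4) (hw : ∀ l, w l = v (Sum.inr (Sum.inr l))) :
    hWt v = hWt w := by
  apply Nat.card_congr
  refine
    { toFun := fun x => ?_
      invFun := fun x => ⟨Sum.inr (Sum.inr x.1), by rw [← hw]; exact x.2⟩
      left_inv := ?_
      right_inv := ?_ }
  · rcases x with ⟨(a | b | l), h⟩
    · exact absurd (h1 a) h
    · exact absurd (h2 b) h
    · exact ⟨l, by rw [hw]; exact h⟩
  · rintro ⟨(a | b | l), h⟩
    · exact absurd (h1 a) h
    · exact absurd (h2 b) h
    · rfl
  · rintro ⟨l, h⟩; rfl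

/-- For a self-orthogonal additive code `C ⊆ C⊥`, `C ≠ C⊥`, of type `4^{k₀}2^{k₁}` in
standard form with `d` the minimum weight of `C⊥ \ C`, if `3k₁ < 2n − 4k₀`, then there
is an additive code `S ⊆ GF(4)^{n−k₀−k₁}` with `|S| = 2^{2n−4k₀−3k₁}` whose nonzero
codewords all have weight at least `d`. -/
theorem stmt11 (k0 k1 m : ℕ) (ω : F4)
    (A1 A2 : Matrix (Fin k0) (Fin k1) F4) (A3 : Matrix (Fin k1) (Fin m) F4)
    (B1 B2 : Matrix (Fin k0) (Fin m) F4)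
    (hω : orderOf ω = 3)
    (hB1 : ∀ i j, B1 i j = 0 ∨ B1 i j = 1) (hB2 : ∀ i j, B2 i j = 0 ∨ B2 i j = 1)
    (hli : LinearIndependent (ZMod 2) (stdRow k0 k1 m ω A1 A2 A3 B1 B2))
    (C : Submodule (ZMod 2) ((Fin k0 ⊕ Fin k1 ⊕ Fin m) → F4))
    (hC : C = Submodule.span (ZMod 2) (Set.range (stdRow k0 k1 m ω A1 A2 A3 B1 B2)))
    (hself : (C : Set ((Fin k0 ⊕ Fin k1 ⊕ Fin m) → F4)) ⊆ trDual (C : Set ((Fin k0 ⊕ Fin k1 ⊕ Fin m) → F4)))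
    (hne : (C : Set ((Fin k0 ⊕ Fin k1 ⊕ Fin m) → F4)) ≠ trDual (C : Set ((Fin k0 ⊕ Fin k1 ⊕ Fin m) → F4)))
    (d : ℕ)
    (hd : IsLeast {w : ℕ | ∃ v ∈ trDual (C : Set ((Fin k0 ⊕ Fin k1 ⊕ Fin m) → F4)), v ∉ C ∧ hWt v = w} d)
    (hk1 : 3 * k1 + 4 * k0 < 2 * (k0 + k1 + m)) :
    ∃ S : Submodule (ZMod 2) (Fin m → F4),
      Nat.card S = 2 ^ (2 * (k0 + k1 + m) - 4 * k0 - 3 * k1) ∧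
      ∀ v ∈ S, v ≠ 0 → d ≤ hWt v := by
  classical
  set t := 2 * (k0 + k1 + m) - 4 * k0 - 3 * k1 with ht_def
  -- the kernel of the dual-pairing map
  set Kp := LinearMap.ker (Psi hω C) with hKp_def
  -- vectors vanishing on the first two blocks
  set L := LinearMap.funLeft (ZMod 2) F4
      (Sum.map id Sum.inl : Fin k0 ⊕ Fin k1 → Fin k0 ⊕ Fin k1 ⊕ Fin m) with hL_def
  set W := LinearMap.ker L with hW_def
  have hWmem : ∀ v : (Fin k0 ⊕ Fin k1 ⊕ Fin m) → F4, v ∈ W ↔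
      ((∀ a, v (Sum.inl a) = 0) ∧ (∀ b, v (Sum.inr (Sum.inl b)) = 0)) := by
    intro v
    constructor
    · intro hv
      have hv' : L v = 0 := LinearMap.mem_ker.mp hv
      constructor
      · intro a; exact congrFun hv' (Sum.inl a)
      · intro b; exact congrFun hv' (Sum.inr b)
    · intro ⟨ha, hb⟩
      apply LinearMap.mem_ker.mpr
      funext j
      rcases j with a | b
      · exact ha a
      · exact hb b
  -- the projection onto the last block
  set R := LinearMap.funLeft (ZMod 2) F4
      (fun l : Fin m => (Sum.inr (Sum.inr l) : Fin k0 ⊕ Fin k1 ⊕ Fin m)) with hR_def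
  set D0 := Kp ⊓ W with hD0_def
  set S0 := D0.map R with hS0_def
  -- dimension counting
  have frV : Module.finrank (ZMod 2) ((Fin k0 ⊕ Fin k1 ⊕ Fin m) → F4)
      = 2 * (k0 + k1 + m) := by
    rw [Module.finrank_pi_fintype]
    simp [finrankF4, Finset.sum_const]
    ring
  have frT : Module.finrank (ZMod 2) ((Fin k0 ⊕ Fin k1) → F4) = 2 * (k0 + k1) := by
    rw [Module.finrank_pi_fintype]
    simp [finrankF4, Finset.sum_const]
    ring
  have frC : Module.finrank (ZMod 2) C = 2 * k0 + k1 := by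
    rw [hC, finrank_span_eq_card hli]
    simp
    ring
  have frKp : 2 * (k0 + k1 + m) ≤ Module.finrank (ZMod 2) Kp + (2 * k0 + k1) := by
    have := finrank_ker_Psi hω C
    rw [frV, frC] at this
    exact this
  have frW : 2 * (k0 + k1 + m) ≤ Module.finrank (ZMod 2) W + 2 * (k0 + k1) := by
    have h := LinearMap.finrank_range_add_finrank_ker L
    have h2 : Module.finrank (ZMod 2) (LinearMap.range L) ≤ 2 * (k0 + k1) := by
      rw [← frT]; exact Submodule.finrank_le _
    rw [frV, ← hW_def] at h
    omega
  have frD0 : t ≤ Module.finrank (ZMod 2) D0 := by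
    have h := Submodule.finrank_sup_add_finrank_inf_eq Kp W
    rw [← hD0_def] at h
    have h2 : Module.finrank (ZMod 2) ↥(Kp ⊔ W) ≤ 2 * (k0 + k1 + m) := by
      rw [← frV]; exact Submodule.finrank_le _
    omega
  -- the projection is injective on D0
  have hinj : ∀ v ∈ D0, R v = 0 → v = 0 := by
    intro v hv hRv
    have hW' := (Submodule.mem_inf.mp hv).2
    rw [hWmem v] at hW'
    funext j
    rcases j with a | b | l
    · exact hW'.1 a
    · exact hW'.2 b
    · exact congrFun hRv l
  have frS0 : t ≤ Module.finrank (ZMod 2) S0 := by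
    set f := R.domRestrict D0 with hf_def
    have hker : LinearMap.ker f = ⊥ := by
      rw [Submodule.eq_bot_iff]
      intro x hx
      have := hinj x.1 x.2 (LinearMap.mem_ker.mp hx)
      exact Subtype.ext this
    have h := LinearMap.finrank_range_add_finrank_ker f
    rw [LinearMap.range_domRestrict, hker, finrank_bot] at h
    rw [hS0_def]
    omega
  -- choose a subspace of S0 of dimension exactly t
  have ht' : t ≤ Module.finrank (ZMod 2) S0 := frS0
  set bS := Module.finBasis (ZMod 2) S0 with hbS_def
  have licoe : LinearIndependent (ZMod 2) (fun i => (bS i : Fin m → F4)) :=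
    bS.linearIndependent.map' S0.subtype (Submodule.ker_subtype S0)
  set g : Fin t → (Fin m → F4) := fun i => (bS (Fin.castLE ht' i) : Fin m → F4) with hg_def
  have lig : LinearIndependent (ZMod 2) g :=
    licoe.comp (Fin.castLE ht') (Fin.castLE_injective ht')
  refine ⟨Submodule.span (ZMod 2) (Set.range g), ?_, ?_⟩
  · -- cardinality
    set S := Submodule.span (ZMod 2) (Set.range g) with hS_def
    have frS : Module.finrank (ZMod 2) S = t := by
      rw [hS_def, finrank_span_eq_card lig, Fintype.card_fin]
    haveI : Fintype S := Fintype.ofFinite S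
    have hcard := Module.card_fintype (Module.finBasis (ZMod 2) S)
    rw [ZMod.card, Fintype.card_fin, frS] at hcard
    rw [Nat.card_eq_fintype_card, hcard]
  · -- weight bound
    intro v hv hvne
    have hSS0 : v ∈ S0 := by
      have : Submodule.span (ZMod 2) (Set.range g) ≤ S0 := by
        rw [Submodule.span_le]
        rintro x ⟨i, rfl⟩
        exact (bS (Fin.castLE ht' i)).2
      exact this hv
    obtain ⟨u, hu, rfl⟩ := Submodule.mem_map.mp hSS0
    have huK : u ∈ Kp := (Submodule.mem_inf.mp hu).1
    have huW : u ∈ W := (Submodule.mem_inf.mp hu).2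
    rw [hWmem u] at huW
    have hune : u ≠ 0 := by
      intro h; apply hvne; rw [h, map_zero]
    have hdual : u ∈ trDual (C : Set ((Fin k0 ⊕ Fin k1 ⊕ Fin m) → F4)) :=
      ker_Psi_subset hω C huK
    have hnotC : u ∉ C := by
      intro hC'
      apply hune
      exact std_zero hω (hC ▸ hC') huW.1 huW.2
    have hle : d ≤ hWt u := hd.2 ⟨u, hdual, hnotC, rfl⟩
    have heq : hWt u = hWt (R u) :=
      hWt_proj u huW.1 huW.2 (R u) (fun l => rfl)
    rw [← heq]
    exact hle
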